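/- Let G^X = (V, E^X, s) be an extraction order. If two vertices i, i' are each the source of a confluence with target j, then either i' lies on a directed path from i to j, or i lies on a directed path from i' to j, or there exists a vertex s' that reaches both i and i' and is itself the source of a confluence with target j whose path-edge set contains all edges on paths from i to j and from i' to j. -/

import Mathlib

/-- The list of consecutive edges traversed by a path given as a list of vertices. -/
def pathEdges {V : Type*} (p : List V) : List (V × V) := p.zip p.tail

/-- A (simple) directed path from `a` to `b` in the edge set `E`, given as the
nonempty list of visited vertices. -/
def IsPath {V : Type*} (E : Finset (V × V)) (a b : V) (p : List V) : Prop :=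
  p ≠ [] ∧ p.head? = some a ∧ p.getLast? = some b ∧ p.Nodup ∧
    ∀ e ∈ pathEdges p, e ∈ E

/-- An extraction order: a rooted DAG in which every vertex is reachable from the root. -/
structure ExtractionOrder (V : Type*) where
  E : Finset (V × V)
  root : V
  reach : ∀ v : V, ∃ p : List V, IsPath E root v p
  acyclic : ∀ u v : V, (u, v) ∈ E → ¬ ∃ p : List V, IsPath E v u p

/-- A confluence from `i` to `j`: two distinct directed paths from `i` to `j`
that are vertex-disjoint except at their shared endpoints. -/
def IsConfluence {V : Type*} (E : Finset (V × V)) (i j : V) (p₁ p₂ : List V) : Prop :=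
  i ≠ j ∧ p₁ ≠ p₂ ∧ IsPath E i j p₁ ∧ IsPath E i j p₂ ∧
    ∀ v, v ∈ p₁ → v ∈ p₂ → v = i ∨ v = j

/-- The edge `e` is labeled with `j` iff some confluence with target `j` contains `e`. -/
def IsLabeled {V : Type*} (E : Finset (V × V)) (e : V × V) (j : V) : Prop :=
  ∃ i p₁ p₂, IsConfluence E i j p₁ p₂ ∧ (e ∈ pathEdges p₁ ∨ e ∈ pathEdges p₂)

/-- The edge `e` lies on some directed path from `i` to `j`. -/
def OnPath {V : Type*} (E : Finset (V × V)) (i j : V) (e : V × V) : Prop :=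
  ∃ p, IsPath E i j p ∧ e ∈ pathEdges p

/-- The label set of an edge. -/
def labelSet {V : Type*} (E : Finset (V × V)) (e : V × V) : Set V :=
  {j | IsLabeled E e j}

/-- Two edges lie in the same edge bag (of the common tail `e.1`) iff they are linked by a
chain of outgoing edges of `e.1` with pairwise intersecting label sets. -/
def inSameBag {V : Type*} (E : Finset (V × V)) (e e' : V × V) : Prop :=
  Relation.ReflTransGen
    (fun a b => a ∈ E ∧ b ∈ E ∧ a.1 = e.1 ∧ b.1 = e.1 ∧
      (labelSet E a ∩ labelSet E b).Nonempty) e e'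

/-- The union of the label sets of the edges in the bag of `e`. -/
def bagLabels {V : Type*} (E : Finset (V × V)) (e : V × V) : Set V :=
  {j | ∃ e', inSameBag E e e' ∧ IsLabeled E e' j}

/-- The width of an extraction order: one plus the maximal number of labels in any edge bag. -/
noncomputable def widthX {V : Type*} (X : ExtractionOrder V) : ℕ :=
  1 + X.E.sup (fun e => (bagLabels X.E e).ncard)

/-- `EX` is obtained from `E` by possibly reversing the orientation of some edges. -/
def IsOrientationOf {V : Type*} (EX E : Finset (V × V)) : Prop :=
  (∀ u v : V, (u, v) ∈ EX → (u, v) ∈ E ∨ (v, u) ∈ E) ∧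
  (∀ u v : V, (u, v) ∈ E → (u, v) ∈ EX ∨ (v, u) ∈ EX)

/-- The extraction width of a directed graph: the minimum width over all its extraction orders. -/
noncomputable def extractionWidth {V : Type*} (E : Finset (V × V)) : ℕ :=
  sInf {w | ∃ X : ExtractionOrder V, IsOrientationOf X.E E ∧ widthX X = w}

/-- The underlying undirected simple graph of a directed edge set. -/
def underlying {V : Type*} (E : Finset (V × V)) : SimpleGraph V where
  Adj u v := u ≠ v ∧ ((u, v) ∈ E ∨ (v, u) ∈ E)
  symm := by constructor; intro u v h; exact ⟨h.1.symm, h.2.elim Or.inr Or.inl⟩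
  loopless := by constructor; intro u h; exact h.1 rfl

/-!
If neither of `i`, `i'` reaches the other, follow a root path to `i'` and then a path from `i'`
to `j`, and let `x` be the last vertex of this route on a fixed root path `R` to `i`. Then `x`
reaches `i` and `i'`, and the rest of the route runs from `x` to `j` off `R`. Where it first meets
a confluence `(q₁, q₂)` at `i`, say at `y ∈ q₁`, the route to `y` continued along `q₁`, and `R`
from `x` to `i` continued along `q₂`, form a confluence at `x`. Acyclicity keeps all these
concatenations simple, and every path from `i` or `i'` to `j` extends back to `x`.
-/

namespace List

variable {α : Type*}

theorem exists_eq_append_cons_of_first (p : α → Prop) {l : List α} (h : ∃ v ∈ l, p v) :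
    ∃ l₁ y l₂, l = l₁ ++ y :: l₂ ∧ p y ∧ ∀ v ∈ l₁, ¬p v := by
  classical
  obtain ⟨y, hy⟩ := Option.isSome_iff_exists.1 (List.find?_isSome.2 (by simpa using h) :
    (l.find? (fun v => decide (p v))).isSome)
  obtain ⟨hpy, l₁, l₂, rfl, hl₁⟩ := List.find?_eq_some_iff_append.1 hy
  exact ⟨l₁, y, l₂, rfl, by simpa using hpy, fun v hv => by simpa using hl₁ v hv⟩

theorem exists_eq_append_cons_of_last (p : α → Prop) {l : List α} (h : ∃ v ∈ l, p v) :
    ∃ l₁ y l₂, l = l₁ ++ y :: l₂ ∧ p y ∧ ∀ v ∈ l₂, ¬p v := by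
  obtain ⟨l₁, y, l₂, hl, hy, hl₁⟩ := exists_eq_append_cons_of_first p (l := l.reverse) (by simpa)
  exact ⟨l₂.reverse, y, l₁.reverse, by simpa using congrArg reverse hl, hy,
    fun v hv => hl₁ v (by simpa using hv)⟩

end List

section Paths

variable {V : Type*} {E : Finset (V × V)} {a b c u v w : V} {p q : List V}

theorem mem_pathEdges_iff : (a, b) ∈ pathEdges p ↔ ∃ l₁ l₂, p = l₁ ++ a :: b :: l₂ := by
  induction p with
  | nil => simp [pathEdges]
  | cons x t ih =>
    cases t with
    | nil =>
      simp only [pathEdges, List.tail_cons, List.zip_nil_right, List.not_mem_nil, false_iff]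
      rintro ⟨l₁, l₂, h⟩
      have := congrArg List.length h
      simp only [List.length_append, List.length_cons, List.length_nil] at this
      omega
    | cons y t' =>
      change (a, b) ∈ (x, y) :: pathEdges (y :: t') ↔ _
      rw [List.mem_cons, ih]
      constructor
      · rintro (h | ⟨l₁, l₂, h⟩)
        · simp only [Prod.mk.injEq] at h
          exact ⟨[], t', by simp [h]⟩
        · exact ⟨x :: l₁, l₂, by simp [h]⟩
      · rintro ⟨_ | ⟨z, l₁⟩, l₂, h⟩
        · simp_all
        · simp only [List.cons_append, List.cons.injEq] at h
          exact Or.inr ⟨l₁, l₂, h.2⟩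

theorem pathEdges_subset_of_infix (h : p <:+: q) : pathEdges p ⊆ pathEdges q := by
  obtain ⟨s, t, rfl⟩ := h
  rintro ⟨a, b⟩ hab
  obtain ⟨l₁, l₂, rfl⟩ := mem_pathEdges_iff.1 hab
  exact mem_pathEdges_iff.2 ⟨s ++ l₁, l₂ ++ t, by simp⟩

theorem forall_mem_pathEdges_iff_isChain :
    (∀ e ∈ pathEdges p, e ∈ E) ↔ p.IsChain (fun u v => (u, v) ∈ E) := by
  rw [List.isChain_iff_forall_rel_of_append_cons_cons]
  constructor
  · exact fun h a b l₁ l₂ hp => h _ (mem_pathEdges_iff.2 ⟨l₁, l₂, hp⟩)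
  · rintro h ⟨a, b⟩ he
    obtain ⟨l₁, l₂, hp⟩ := mem_pathEdges_iff.1 he
    exact h hp

namespace IsPath

theorem head?_eq (h : IsPath E a b p) : p.head? = some a := h.2.1

theorem getLast?_eq (h : IsPath E a b p) : p.getLast? = some b := h.2.2.1

theorem nodup (h : IsPath E a b p) : p.Nodup := h.2.2.2.1

theorem head_mem (h : IsPath E a b p) : a ∈ p := List.mem_of_mem_head? h.head?_eq

theorem last_mem (h : IsPath E a b p) : b ∈ p := List.mem_of_mem_getLast? h.getLast?_eq

theorem isChain (h : IsPath E a b p) : p.IsChain (fun u v => (u, v) ∈ E) :=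
  forall_mem_pathEdges_iff_isChain.1 h.2.2.2.2

theorem singleton (a : V) : IsPath E a a [a] :=
  ⟨List.cons_ne_nil _ _, rfl, rfl, List.nodup_singleton a, by simp [pathEdges]⟩

theorem to_suffix {l₁ l₂ : List V} (h : IsPath E a b (l₁ ++ v :: l₂)) :
    IsPath E v b (v :: l₂) := by
  obtain ⟨-, -, hlast, hnd, hE⟩ := h
  refine ⟨List.cons_ne_nil _ _, rfl, ?_, hnd.of_append_right, ?_⟩
  · simpa [List.getLast?_append] using hlast
  · exact fun e he => hE e (pathEdges_subset_of_infix (List.suffix_append _ _).isInfix he)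

theorem to_prefix {l₁ l₂ : List V} (h : IsPath E a b (l₁ ++ v :: l₂)) :
    IsPath E a v (l₁ ++ [v]) := by
  have hpre : l₁ ++ [v] <+: l₁ ++ v :: l₂ := ⟨l₂, by simp⟩
  obtain ⟨-, hhead, -, hnd, hE⟩ := h
  refine ⟨by simp, ?_, List.getLast?_concat, hnd.sublist hpre.sublist, ?_⟩
  · cases l₁ <;> simpa using hhead
  · exact fun e he => hE e (pathEdges_subset_of_infix hpre.isInfix he)

theorem exists_suffix_subset (h : IsPath E a b p) (hv : v ∈ p) :
    ∃ s ⊆ p, IsPath E v b s := by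
  obtain ⟨l₁, l₂, rfl⟩ := List.append_of_mem hv
  exact ⟨v :: l₂, List.subset_append_right _ _, h.to_suffix⟩

theorem cons (hE : (a, w) ∈ E) (h : IsPath E w b p) (ha : a ∉ p) : IsPath E a b (a :: p) := by
  obtain ⟨t, rfl⟩ := List.head?_eq_some_iff.1 h.head?_eq
  refine ⟨List.cons_ne_nil _ _, rfl, ?_, List.nodup_cons.2 ⟨ha, h.nodup⟩, ?_⟩
  · rw [List.getLast?_cons_cons]; exact h.getLast?_eq
  · rw [forall_mem_pathEdges_iff_isChain, List.isChain_cons_cons]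
    exact ⟨hE, h.isChain⟩

end IsPath

def Reach (E : Finset (V × V)) (a b : V) : Prop := ∃ p, IsPath E a b p

theorem IsPath.reach_of_mem (h : IsPath E a b p) (hv : v ∈ p) : Reach E a v ∧ Reach E v b := by
  obtain ⟨l₁, l₂, rfl⟩ := List.append_of_mem hv
  exact ⟨⟨_, h.to_prefix⟩, ⟨_, h.to_suffix⟩⟩

theorem Reach.of_edge (hE : (a, w) ∈ E) : Reach E w b → Reach E a b := by
  rintro ⟨p, hp⟩
  by_cases ha : a ∈ p
  · exact (hp.reach_of_mem ha).2
  · exact ⟨a :: p, hp.cons hE ha⟩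

theorem reach_iff_reflTransGen :
    Reach E a b ↔ Relation.ReflTransGen (fun u v => (u, v) ∈ E) a b := by
  constructor
  · rintro ⟨p, hp⟩
    obtain ⟨t, rfl⟩ := List.head?_eq_some_iff.1 hp.head?_eq
    refine List.relationReflTransGen_of_exists_isChain_cons t hp.isChain ?_
    simpa [List.getLast?_eq_some_getLast (List.cons_ne_nil a t)] using hp.getLast?_eq
  · intro h
    induction h using Relation.ReflTransGen.head_induction_on with
    | refl => exact ⟨_, IsPath.singleton b⟩
    | head hE _ ih => exact ih.of_edge hE

theorem Reach.trans (hab : Reach E a b) (hbc : Reach E b c) : Reach E a c :=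
  reach_iff_reflTransGen.2 ((reach_iff_reflTransGen.1 hab).trans (reach_iff_reflTransGen.1 hbc))

end Paths

section Acyclic

variable {V : Type*} {E : Finset (V × V)} {a b c u v w i j x : V} {p q : List V}

def IsAcyclic (E : Finset (V × V)) : Prop := ∀ u v, (u, v) ∈ E → ¬Reach E v u

theorem ExtractionOrder.isAcyclic (X : ExtractionOrder V) : IsAcyclic X.E := X.acyclic

theorem Reach.antisymm (hE : IsAcyclic E) (huv : Reach E u v) (hvu : Reach E v u) : u = v := by
  rcases Relation.ReflTransGen.cases_head_iff.1 (reach_iff_reflTransGen.1 huv) with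
    h | ⟨w, huw, hwv⟩
  · exact h
  · exact absurd ((reach_iff_reflTransGen.2 hwv).trans hvu) (hE u w huw)

theorem IsPath.append (hE : IsAcyclic E) (hp : IsPath E a b p) (hq : IsPath E b c q) :
    IsPath E a c (p.dropLast ++ q) := by
  obtain ⟨p', rfl⟩ := List.getLast?_eq_some_iff.1 hp.getLast?_eq
  obtain ⟨q', rfl⟩ := List.head?_eq_some_iff.1 hq.head?_eq
  have hb : b ∉ p' := fun h => (List.nodup_append.1 hp.nodup).2.2 b h b (by simp) rfl
  rw [List.dropLast_concat]
  refine ⟨by simp, ?_, ?_, ?_, ?_⟩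
  · have hhead := hp.head?_eq
    cases p' <;> simp_all
  · simpa [List.getLast?_append] using hq.getLast?_eq
  · refine List.nodup_append.2 ⟨hp.nodup.of_append_left, hq.nodup, ?_⟩
    rintro v hvp _ hvq rfl
    -- a vertex on both paths would lie on a cycle through `b`
    have hvb : v = b := Reach.antisymm hE (hp.reach_of_mem (by simp [hvp])).2
      (hq.reach_of_mem hvq).1
    exact hb (hvb ▸ hvp)
  · rw [forall_mem_pathEdges_iff_isChain]
    simpa using hp.isChain.append_overlap (l₂ := [b]) (by simpa using hq.isChain) (by simp)

theorem Reach.exists_isPath_mem (hE : IsAcyclic E) (hab : Reach E a b) (hq : IsPath E b c q) :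
    ∃ p, IsPath E a c p ∧ b ∈ p := by
  obtain ⟨σ, hσ⟩ := hab
  exact ⟨_, hσ.append hE hq, List.mem_append_right _ hq.head_mem⟩

theorem OnPath.of_reach {e : V × V} (hE : IsAcyclic E) (hx : Reach E x i) (he : OnPath E i j e) :
    OnPath E x j e := by
  obtain ⟨σ, hσ⟩ := hx
  obtain ⟨p, hp, hep⟩ := he
  exact ⟨_, hσ.append hE hp, pathEdges_subset_of_infix (List.suffix_append _ _).isInfix hep⟩

end Acyclic

section Confluence

variable {V : Type*} {E : Finset (V × V)} {i j x y : V} {q₁ q₂ S T : List V}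

theorem IsConfluence.symm (h : IsConfluence E i j q₁ q₂) : IsConfluence E i j q₂ q₁ :=
  ⟨h.1, h.2.1.symm, h.2.2.2.1, h.2.2.1, fun v h₂ h₁ => h.2.2.2.2 v h₁ h₂⟩

theorem IsConfluence.isPath_left (h : IsConfluence E i j q₁ q₂) : IsPath E i j q₁ := h.2.2.1

/-- The path `T` enters the confluence at `y`; continuing along `q₁` from `y`, and going along `S`
to `i` and then along `q₂`, gives a confluence from `x`. -/
theorem IsConfluence.extend (hE : IsAcyclic E) (hc : IsConfluence E i j q₁ q₂)
    (hS : IsPath E x i S) (hT : IsPath E x y T) (hy : y ∈ q₁)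
    (hTq : ∀ v ∈ T, v ∈ q₁ ∨ v ∈ q₂ → v = y) (hST : ∀ v ∈ S, v ∈ T → v = x) (hxi : x ≠ i) :
    ∃ P₁ P₂, IsConfluence E x j P₁ P₂ := by
  obtain ⟨hij, -, hq₁, hq₂, hq⟩ := hc
  obtain ⟨Q, hQq₁, hQ⟩ := hq₁.exists_suffix_subset hy
  have hiT : i ∉ T := fun h => hxi (hST i hS.last_mem h).symm
  have hiQ : i ∉ Q := fun h =>
    hiT (Reach.antisymm hE (hQ.reach_of_mem h).1 (hq₁.reach_of_mem hy).1 ▸ hT.last_mem)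
  have hxj : x ≠ j := by
    rintro rfl
    exact hij (Reach.antisymm hE ⟨q₁, hq₁⟩ ⟨S, hS⟩)
  have mem_dropLast_append {l m : List V} {v : V} (h : v ∈ l.dropLast ++ m) : v ∈ l ∨ v ∈ m :=
    (List.mem_append.1 h).imp_left (List.dropLast_subset l ·)
  refine ⟨T.dropLast ++ Q, S.dropLast ++ q₂, hxj, ?_, hT.append hE hQ, hS.append hE hq₂, ?_⟩
  · intro h
    have hi : i ∈ T.dropLast ++ Q := h ▸ List.mem_append_right _ hq₂.head_mem
    exact (mem_dropLast_append hi).elim hiT hiQ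
  · intro v hv₁ hv₂
    rcases mem_dropLast_append hv₁ with hvT | hvQ <;>
      rcases mem_dropLast_append hv₂ with hvS | hvq₂
    · exact Or.inl (hST v hvS hvT)
    · obtain rfl := hTq v hvT (Or.inr hvq₂)
      exact Or.inr <| (hq v hy hvq₂).resolve_left fun h => hiT (h ▸ hvT)
    · exact absurd (Reach.antisymm hE (hq₁.reach_of_mem (hQq₁ hvQ)).1
        (hS.reach_of_mem hvS).2 ▸ hvQ) hiQ
    · exact Or.inr <| (hq v (hQq₁ hvQ) hvq₂).resolve_left fun h => hiQ (h ▸ hvQ)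

theorem IsConfluence.extend_of_disjoint (hE : IsAcyclic E) (hc : IsConfluence E i j q₁ q₂)
    (hS : IsPath E x i S) (hT : IsPath E x j T) (hST : ∀ v ∈ S, v ∈ T → v = x) (hxi : x ≠ i) :
    ∃ P₁ P₂, IsConfluence E x j P₁ P₂ := by
  obtain ⟨T₁, y, T₂, rfl, hy, hT₁⟩ :=
    List.exists_eq_append_cons_of_first (fun v => v ∈ q₁ ∨ v ∈ q₂)
      ⟨j, hT.last_mem, Or.inl hc.isPath_left.last_mem⟩
  have hTq : ∀ v ∈ T₁ ++ [y], v ∈ q₁ ∨ v ∈ q₂ → v = y := by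
    intro v hv hvq
    rcases List.mem_append.1 hv with hv | hv
    · exact absurd hvq (hT₁ v hv)
    · simpa using hv
  have hST' : ∀ v ∈ S, v ∈ T₁ ++ [y] → v = x := fun v hvS hvT =>
    hST v hvS (((List.prefix_append_right_inj T₁).2 ⟨T₂, rfl⟩).subset hvT)
  rcases hy with hy | hy
  · exact hc.extend hE hS hT.to_prefix hy hTq hST' hxi
  · exact hc.symm.extend hE hS hT.to_prefix hy (fun v hv hvq => hTq v hv hvq.symm) hST' hxi

end Confluence

theorem ExtractionOrder.exists_branch_vertex {V : Type*} (X : ExtractionOrder V) {i i' j : V}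
    {P : List V} (hP : IsPath X.E i' j P) (hi'i : ¬Reach X.E i' i) :
    ∃ x S T, IsPath X.E x i S ∧ Reach X.E x i' ∧ IsPath X.E x j T ∧
      ∀ v ∈ S, v ∈ T → v = x := by
  obtain ⟨R, hR⟩ := X.reach i
  obtain ⟨R', hR'⟩ := X.reach i'
  have hD := hR'.append X.isAcyclic hP
  obtain ⟨D₁, x, D₂, hDeq, hxR, hD₂⟩ := List.exists_eq_append_cons_of_last (· ∈ R)
    ⟨X.root, hD.head_mem, hR.head_mem⟩
  have hxD : x ∈ R'.dropLast ++ P := hDeq ▸ List.mem_append_right _ List.mem_cons_self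
  have hxi' : Reach X.E x i' := by
    rcases List.mem_append.1 hxD with hxR' | hxP
    · exact (hR'.reach_of_mem (List.dropLast_subset _ hxR')).2
    · exact absurd ((hP.reach_of_mem hxP).1.trans (hR.reach_of_mem hxR).2) hi'i
  obtain ⟨S, hSR, hS⟩ := hR.exists_suffix_subset hxR
  refine ⟨x, S, x :: D₂, hS, hxi', (hDeq ▸ hD).to_suffix, fun v hvS hvT => ?_⟩
  exact (List.mem_cons.1 hvT).resolve_right fun hv => hD₂ v hv (hSR hvS)

/-- If `i` and `i'` are both sources of confluences with target `j`, then
`i'` lies on a path from `i` to `j`, or `i` lies on a path from `i'` to `j`, or there is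
a vertex `s'` reaching both which is the source of a confluence with target `j` whose
path-edge set contains all edges on paths from `i` to `j` and from `i'` to `j`. -/
theorem stmt13 {V : Type*} (X : ExtractionOrder V) (i i' j : V)
    (hi : ∃ p₁ p₂, IsConfluence X.E i j p₁ p₂)
    (hi' : ∃ p₁ p₂, IsConfluence X.E i' j p₁ p₂) :
    (∃ p, IsPath X.E i j p ∧ i' ∈ p) ∨
    (∃ p, IsPath X.E i' j p ∧ i ∈ p) ∨
    (∃ s' : V,
      (∃ p, IsPath X.E s' i p) ∧ (∃ p, IsPath X.E s' i' p) ∧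
      (∃ q₁ q₂, IsConfluence X.E s' j q₁ q₂) ∧
      (∀ e : V × V, (OnPath X.E i j e ∨ OnPath X.E i' j e) → OnPath X.E s' j e)) := by
  obtain ⟨_, _, hq⟩ := hi
  obtain ⟨_, _, hr⟩ := hi'
  have hE := X.isAcyclic
  by_cases hii' : Reach X.E i i'
  · exact Or.inl (hii'.exists_isPath_mem hE hr.isPath_left)
  by_cases hi'i : Reach X.E i' i
  · exact Or.inr (Or.inl (hi'i.exists_isPath_mem hE hq.isPath_left))
  obtain ⟨x, S, T, hS, hxi', hT, hST⟩ := X.exists_branch_vertex hr.isPath_left hi'i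
  have hxi : x ≠ i := fun h => hii' (h ▸ hxi')
  refine Or.inr (Or.inr ⟨x, ⟨S, hS⟩, hxi', hq.extend_of_disjoint hE hS hT hST hxi, ?_⟩)
  rintro e (he | he)
  exacts [he.of_reach hE ⟨S, hS⟩, he.of_reach hE hxi']
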